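/- arXiv:1909.01928 — 2 statements merged into one kernel-verified Lean document; each statement's English description precedes it below -/
import Mathlib

section
/- Let ξ ∈ 𝔽_q((T^{-1})) be irrational and let α ∈ 𝔽_q((T^{-1})) be arbitrary. Then there exist infinitely many monic polynomials Q ∈ 𝔽_q[T] such that |Qξ − α − P| ≤ 1/(q·|Q|) for some polynomial P ∈ 𝔽_q[T]. -/
open Polynomial Filter
open scoped Classical ENNReal

noncomputable section

variable (Fq : Type) [Field Fq] [Fintype Fq]

/-- The element `T` inside the Laurent-series field `𝔽_q((T⁻¹))`, which we realize
as the field of Hahn/Laurent series in the variable `T⁻¹`. -/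
def Tel : LaurentSeries Fq := HahnSeries.single (-1 : ℤ) 1

/-- The inverse variable `T⁻¹` itself. -/
def TinvEl : LaurentSeries Fq := HahnSeries.single (1 : ℤ) 1

/-- The embedding of the polynomial ring `𝔽_q[T]` into `𝔽_q((T⁻¹))`,
sending `T` to `Tel`. -/
def polyToL (P : Polynomial Fq) : LaurentSeries Fq :=
  Polynomial.eval₂ HahnSeries.C (Tel Fq) P

/-- The absolute value `|x| = q ^ (deg x)` on `𝔽_q((T⁻¹))`, with `|0| = 0`.
Here the degree of `x ≠ 0` is minus the order of `x` as a series in `T⁻¹`. -/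
def labs (x : LaurentSeries Fq) : ℝ :=
  if x = 0 then 0 else (Fintype.card Fq : ℝ) ^ (-x.order)

/-- `‖x‖`: the distance from `x` to the nearest polynomial. -/
def lnorm (x : LaurentSeries Fq) : ℝ :=
  ⨅ P : Polynomial Fq, labs Fq (x - polyToL Fq P)

/-- `x ∈ 𝔽_q(T)`, i.e. `x` is rational. -/
def IsRat (x : LaurentSeries Fq) : Prop :=
  ∃ P Q : Polynomial Fq, Q ≠ 0 ∧ polyToL Fq Q * x = polyToL Fq P

/-!
Write `ξ = ∑ ξⱼ T⁻ʲ`. For `Q` of degree `< d`, the digits `1, …, d` of the fractional part of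
`Q ξ` depend linearly on `Q`; this square (Hankel) system is `fracCoeffs ξ d`. When it is
invertible, one solves it for the lower coefficients of a monic `Q` of degree `d` so that the
digits `1, …, d` of `Q ξ - α` vanish, i.e. `|Q ξ - α - P| ≤ q⁻ᵈ⁻¹ = 1 / (q |Q|)`.
If it were singular for all large `d`, its kernel would provide approximations `P / Q` of `ξ`
so good that consecutive ones coincide as fractions; comparing orders then makes `ξ` rational.
-/

lemma HahnSeries.lt_orderTop_iff_forall_le {R : Type*} [Zero R] {x : HahnSeries ℤ R} {n : ℤ} :
    (n : WithTop ℤ) < x.orderTop ↔ ∀ j ≤ n, x.coeff j = 0 := by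
  refine ⟨fun h j hj => coeff_eq_zero_of_lt_orderTop ((WithTop.coe_le_coe.2 hj).trans_lt h),
    fun h => not_le.1 fun hle => ?_⟩
  obtain ⟨j, hj, hne⟩ :=
    orderTop_lt_iff_exists.1 (hle.trans_lt (WithTop.coe_lt_coe.2 (lt_add_one n)))
  exact hne (h j (by exact_mod_cast Int.lt_add_one_iff.1 (WithTop.coe_lt_coe.1 hj)))

section Embedding

variable {K : Type} [Field K]

@[simp]
lemma polyToL_add (P Q : K[X]) : polyToL K (P + Q) = polyToL K P + polyToL K Q :=
  eval₂_add _ _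

@[simp]
lemma polyToL_sub (P Q : K[X]) : polyToL K (P - Q) = polyToL K P - polyToL K Q :=
  eval₂_sub _

@[simp]
lemma polyToL_mul (P Q : K[X]) : polyToL K (P * Q) = polyToL K P * polyToL K Q :=
  eval₂_mul _ _

@[simp]
lemma polyToL_smul (c : K) (P : K[X]) : polyToL K (c • P) = HahnSeries.C c * polyToL K P :=
  eval₂_smul _ _ _

lemma polyToL_eq_sum (W : K[X]) :
    polyToL K W = ∑ n ∈ W.support, HahnSeries.single (-(n : ℤ)) (W.coeff n) := by
  rw [polyToL, eval₂_eq_sum, Polynomial.sum_def]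
  refine Finset.sum_congr rfl fun n _ => ?_
  rw [Tel, HahnSeries.single_pow, HahnSeries.C_apply, HahnSeries.single_mul_single]
  simp

lemma coeff_polyToL_neg_natCast (W : K[X]) (k : ℕ) :
    (polyToL K W).coeff (-(k : ℤ)) = W.coeff k := by
  simp only [polyToL_eq_sum, HahnSeries.coeff_sum, HahnSeries.coeff_single, neg_inj,
    Nat.cast_inj, Finset.sum_ite_eq, mem_support_iff, ne_eq, ite_not, ite_eq_right_iff]
  exact fun h => h.symm

lemma coeff_polyToL_of_pos (W : K[X]) {j : ℤ} (hj : 0 < j) : (polyToL K W).coeff j = 0 := by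
  simp only [polyToL_eq_sum, HahnSeries.coeff_sum, HahnSeries.coeff_single]
  exact Finset.sum_eq_zero fun n _ => if_neg (by omega)

lemma neg_natDegree_le_orderTop_polyToL (W : K[X]) :
    ((-W.natDegree : ℤ) : WithTop ℤ) ≤ (polyToL K W).orderTop := by
  refine HahnSeries.le_orderTop_iff_forall.2 fun j hj => ?_
  have hj : j < -W.natDegree := WithTop.coe_lt_coe.1 hj
  obtain ⟨k, rfl⟩ : ∃ k : ℕ, j = -k := ⟨(-j).toNat, by omega⟩
  rw [coeff_polyToL_neg_natCast]
  exact coeff_eq_zero_of_natDegree_lt (by omega)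

lemma orderTop_polyToL {W : K[X]} (hW : W ≠ 0) :
    (polyToL K W).orderTop = ((-W.natDegree : ℤ) : WithTop ℤ) := by
  refine le_antisymm (HahnSeries.orderTop_le_of_coeff_ne_zero ?_)
    (neg_natDegree_le_orderTop_polyToL W)
  rw [coeff_polyToL_neg_natCast]
  exact leadingCoeff_ne_zero.2 hW

lemma eq_zero_of_pos_orderTop_polyToL {W : K[X]} (h : 0 < (polyToL K W).orderTop) : W = 0 := by
  by_contra hW
  rw [orderTop_polyToL hW] at h
  norm_cast at h
  omega

lemma polyToL_ne_zero {W : K[X]} (hW : W ≠ 0) : polyToL K W ≠ 0 := by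
  intro h
  have := orderTop_polyToL hW
  rw [h, HahnSeries.orderTop_zero] at this
  exact WithTop.top_ne_coe this

lemma order_polyToL {W : K[X]} (hW : W ≠ 0) : (polyToL K W).order = -W.natDegree :=
  WithTop.coe_injective
    ((HahnSeries.order_eq_orderTop_of_ne_zero (polyToL_ne_zero hW)).trans (orderTop_polyToL hW))

lemma exists_coeff_eq_coeff_neg (y : LaurentSeries K) :
    ∃ P : K[X], ∀ k : ℕ, P.coeff k = y.coeff (-k) := by
  refine ⟨∑ k ∈ Finset.range ((-y.order).toNat + 1), monomial k (y.coeff (-k)), fun k => ?_⟩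
  simp only [finsetSum_coeff, coeff_monomial, Finset.sum_ite_eq', Finset.mem_range]
  split_ifs with hk
  · rfl
  · exact (HahnSeries.coeff_eq_zero_of_lt_order (by omega)).symm

end Embedding

section Approximation

variable {K : Type} [Field K]

lemma exists_lt_orderTop_sub_polyToL (y : LaurentSeries K) (d : ℕ)
    (h : ∀ j : Fin d, y.coeff (j + 1) = 0) :
    ∃ P : K[X], ((d : ℤ) : WithTop ℤ) < (y - polyToL K P).orderTop := by
  obtain ⟨P, hP⟩ := exists_coeff_eq_coeff_neg y
  refine ⟨P, HahnSeries.lt_orderTop_iff_forall_le.2 fun j hj => ?_⟩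
  rw [HahnSeries.coeff_sub]
  rcases le_or_gt j 0 with hj0 | hj0
  · obtain ⟨k, rfl⟩ : ∃ k : ℕ, j = -k := ⟨(-j).toNat, by omega⟩
    rw [coeff_polyToL_neg_natCast, hP, sub_self]
  · rw [coeff_polyToL_of_pos _ hj0, sub_zero]
    obtain ⟨i, rfl⟩ : ∃ i : Fin d, j = i + 1 := ⟨⟨(j - 1).toNat, by omega⟩, by rw [Fin.val_mk]; omega⟩
    exact h i

lemma orderTop_polyToL_mul_pos {W : K[X]} {y : LaurentSeries K}
    (h : ((W.natDegree : ℤ) : WithTop ℤ) < y.orderTop) : 0 < (polyToL K W * y).orderTop := by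
  rcases eq_or_ne W 0 with rfl | hW
  · simp [polyToL]
  rcases eq_or_ne y 0 with rfl | hy
  · simp
  rw [HahnSeries.orderTop_mul, orderTop_polyToL hW, HahnSeries.orderTop_of_ne_zero hy] at *
  norm_cast at h ⊢
  omega

/-- Two good rational approximations `P / Q`, `P' / Q'` of `ξ` are the same fraction: the
difference of the two sides is a polynomial with vanishing polynomial part. -/
lemma polyToL_mul_sub_comm {ξ : LaurentSeries K} {Q Q' P P' : K[X]}
    (h : ((Q'.natDegree : ℤ) : WithTop ℤ) < (polyToL K Q * ξ - polyToL K P).orderTop)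
    (h' : ((Q.natDegree : ℤ) : WithTop ℤ) < (polyToL K Q' * ξ - polyToL K P').orderTop) :
    polyToL K Q * (polyToL K Q' * ξ - polyToL K P') =
      polyToL K Q' * (polyToL K Q * ξ - polyToL K P) := by
  have hpoly : polyToL K Q * (polyToL K Q' * ξ - polyToL K P') -
      polyToL K Q' * (polyToL K Q * ξ - polyToL K P) = polyToL K (Q' * P - Q * P') := by
    simp only [polyToL_sub, polyToL_mul]
    ring
  have hpos : 0 < (polyToL K (Q' * P - Q * P')).orderTop :=
    hpoly ▸ (lt_min (orderTop_polyToL_mul_pos h') (orderTop_polyToL_mul_pos h)).trans_le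
      HahnSeries.min_orderTop_le_orderTop_sub
  rw [← sub_eq_zero, hpoly, eq_zero_of_pos_orderTop_polyToL hpos]
  simp [polyToL]

def fracCoeffs (ξ : LaurentSeries K) (d : ℕ) : degreeLT K d →ₗ[K] Fin d → K where
  toFun Q j := (polyToL K Q * ξ).coeff (j + 1)
  map_add' Q Q' := by
    ext j
    simp [add_mul]
  map_smul' c Q := by
    ext j
    rw [Submodule.coe_smul, polyToL_smul, mul_assoc, HahnSeries.C_mul_eq_smul,
      HahnSeries.coeff_smul]
    rfl

lemma exists_monic_lt_orderTop_of_injective (ξ α : LaurentSeries K) {d : ℕ}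
    (h : Function.Injective (fracCoeffs ξ d)) :
    ∃ Q : K[X], Q.Monic ∧ Q.natDegree = d ∧ ∃ P : K[X],
      ((d : ℤ) : WithTop ℤ) < (polyToL K Q * ξ - α - polyToL K P).orderTop := by
  have := (degreeLTEquiv K d).symm.finiteDimensional
  obtain ⟨R, hR⟩ := (LinearMap.injective_iff_surjective_of_finrank_eq_finrank
    (degreeLTEquiv K d).finrank_eq).1 h fun j => (α - polyToL K (X ^ d) * ξ).coeff (j + 1)
  have hR_deg : (R : K[X]).degree < d := mem_degreeLT.1 R.2
  refine ⟨X ^ d + (R : K[X]), monic_X_pow_add hR_deg, ?_,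
    exists_lt_orderTop_sub_polyToL _ d fun j => ?_⟩
  · rw [natDegree_add_eq_left_of_degree_lt (by rwa [degree_X_pow]), natDegree_X_pow]
  · have hRj := congrFun hR j
    simp only [fracCoeffs, LinearMap.coe_mk, AddHom.coe_mk, HahnSeries.coeff_sub] at hRj
    rw [polyToL_add, add_mul, HahnSeries.coeff_sub, HahnSeries.coeff_add, hRj]
    ring

lemma exists_lt_orderTop_of_not_injective {ξ : LaurentSeries K} {d : ℕ}
    (h : ¬ Function.Injective (fracCoeffs ξ d)) :
    ∃ Q : K[X], Q ≠ 0 ∧ Q.natDegree < d ∧ ∃ P : K[X],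
      ((d : ℤ) : WithTop ℤ) < (polyToL K Q * ξ - polyToL K P).orderTop := by
  obtain ⟨Q, hQ, hQ0⟩ : ∃ Q, fracCoeffs ξ d Q = 0 ∧ Q ≠ 0 := by
    simpa [injective_iff_map_eq_zero] using h
  have hQ0' : (Q : K[X]) ≠ 0 := by simpa using hQ0
  exact ⟨Q, hQ0', (natDegree_lt_iff_degree_lt hQ0').2 (mem_degreeLT.1 Q.2),
    exists_lt_orderTop_sub_polyToL _ d fun j => congrFun hQ j⟩

/-- Linking consecutive good approximations by `polyToL_mul_sub_comm` shows that
`ord (Q ξ - P) + deg Q` is the same for all of them, while it must grow with `d`. -/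
lemma exists_ge_injective_fracCoeffs {ξ : LaurentSeries K} (hξ : ¬ IsRat K ξ) (D : ℕ) :
    ∃ d ≥ D, Function.Injective (fracCoeffs ξ d) := by
  by_contra! hD
  choose Q hQ0 hQ_deg P hP using
    fun n : ℕ => exists_lt_orderTop_of_not_injective (hD (D + n) (by omega))
  set y : ℕ → LaurentSeries K := fun n => polyToL K (Q n) * ξ - polyToL K (P n)
  have hy0 (n : ℕ) : y n ≠ 0 := fun h => hξ ⟨P n, Q n, hQ0 n, sub_eq_zero.1 h⟩
  have hy_order (n : ℕ) : ((D + n : ℕ) : ℤ) < (y n).order := by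
    have := hP n
    rwa [← HahnSeries.order_eq_orderTop_of_ne_zero (hy0 n), WithTop.coe_lt_coe] at this
  have hconst (n : ℕ) : (y n).order + (Q n).natDegree = (y 0).order + (Q 0).natDegree := by
    induction n with
    | zero => rfl
    | succ n ih =>
      have hcomm := congrArg HahnSeries.order <| polyToL_mul_sub_comm
        ((WithTop.coe_le_coe.2 (by have := hQ_deg (n + 1); omega)).trans_lt (hP n))
        ((WithTop.coe_le_coe.2 (by have := hQ_deg n; omega)).trans_lt (hP (n + 1)))
      rw [HahnSeries.order_mul (polyToL_ne_zero (hQ0 n)) (hy0 (n + 1)),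
        HahnSeries.order_mul (polyToL_ne_zero (hQ0 (n + 1))) (hy0 n),
        order_polyToL (hQ0 n), order_polyToL (hQ0 (n + 1))] at hcomm
      omega
  have h₁ := hconst ((y 0).order + (Q 0).natDegree).toNat
  have h₂ := hy_order ((y 0).order + (Q 0).natDegree).toNat
  omega

end Approximation

section AbsoluteValue

variable {K : Type} [Field K] [Fintype K]

lemma labs_le_of_lt_orderTop {x : LaurentSeries K} {n : ℤ} (h : (n : WithTop ℤ) < x.orderTop) :
    labs K x ≤ (Fintype.card K : ℝ) ^ (-(n + 1)) := by
  rw [labs]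
  split_ifs with hx
  · positivity
  · rw [← HahnSeries.order_eq_orderTop_of_ne_zero hx, WithTop.coe_lt_coe] at h
    exact zpow_le_zpow_right₀ (Nat.one_le_cast.2 Fintype.card_pos) (by omega)

lemma labs_polyToL {W : K[X]} (hW : W ≠ 0) :
    labs K (polyToL K W) = (Fintype.card K : ℝ) ^ (W.natDegree : ℤ) := by
  rw [labs, if_neg (polyToL_ne_zero hW), order_polyToL hW, neg_neg]

end AbsoluteValue

/-- **Approximation by monic multiples.** For irrational `ξ` and arbitrary `α`
there exist infinitely many monic polynomials `Q` with
`|Qξ − α − P| ≤ 1 / (q |Q|)` for some polynomial `P`. -/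
theorem stmt2 (ξ α : LaurentSeries Fq) (hξ : ¬ IsRat Fq ξ) :
    {Q : Polynomial Fq | Q.Monic ∧ ∃ P : Polynomial Fq,
      labs Fq (polyToL Fq Q * ξ - α - polyToL Fq P) ≤
        1 / ((Fintype.card Fq : ℝ) * labs Fq (polyToL Fq Q))}.Infinite := by
  refine Set.Infinite.of_image natDegree (Set.infinite_of_forall_exists_gt fun D => ?_)
  obtain ⟨d, hd, hinj⟩ := exists_ge_injective_fracCoeffs hξ (D + 1)
  obtain ⟨Q, hQ, rfl, P, hP⟩ := exists_monic_lt_orderTop_of_injective ξ α hinj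
  refine ⟨Q.natDegree, ⟨Q, ⟨hQ, P, ?_⟩, rfl⟩, hd⟩
  have hq : (Fintype.card Fq : ℝ) ≠ 0 := by positivity
  calc labs Fq (polyToL Fq Q * ξ - α - polyToL Fq P)
      ≤ (Fintype.card Fq : ℝ) ^ (-((Q.natDegree : ℤ) + 1)) := labs_le_of_lt_orderTop hP
    _ = 1 / ((Fintype.card Fq : ℝ) * labs Fq (polyToL Fq Q)) := by
      rw [labs_polyToL hQ.ne_zero, zpow_neg, zpow_add_one₀ hq, one_div, mul_comm]

end
end

section
/- Let θ, φ, ψ, χ ∈ 𝔽_q((T^{-1})) with ψ ≠ 0, and suppose max{|θχ − φψ|, |ψχ|} ≤ Δ for some real Δ > 0. Then there exists a polynomial P ∈ 𝔽_q[T] satisfying both |θ + Pψ|·|φ + Pχ| ≤ Δ/q and |θ + Pψ| ≤ |ψ|. -/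
open Polynomial Filter
open scoped Classical ENNReal

noncomputable section

variable (Fq : Type) [Field Fq] [Fintype Fq]

/-!
Take `P` to be minus the polynomial part of `θ / ψ`, so that `|θ + Pψ| ≤ |ψ| / q`.
The identity `ψ (φ + Pχ) = χ (θ + Pψ) - (θχ - φψ)` and the ultrametric inequality give
`|ψ| |φ + Pχ| ≤ max Δ (|χ| |θ + Pψ|)`, and each alternative yields the product bound.
-/

lemma one_lt_card_cast : (1 : ℝ) < Fintype.card Fq := by
  exact_mod_cast Fintype.one_lt_card

variable {Fq}

lemma labs_nonneg (x : LaurentSeries Fq) : 0 ≤ labs Fq x := by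
  unfold labs
  split_ifs <;> positivity

lemma labs_neg (x : LaurentSeries Fq) : labs Fq (-x) = labs Fq x := by
  simp only [labs, neg_eq_zero, HahnSeries.order_neg]

lemma labs_mul (x y : LaurentSeries Fq) : labs Fq (x * y) = labs Fq x * labs Fq y := by
  by_cases hx : x = 0
  · simp [hx, labs]
  by_cases hy : y = 0
  · simp [hy, labs]
  rw [labs, labs, labs, if_neg hx, if_neg hy, if_neg (mul_ne_zero hx hy),
    HahnSeries.order_mul hx hy, neg_add, zpow_add₀ (by positivity)]

lemma labs_add_le_max (x y : LaurentSeries Fq) :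
    labs Fq (x + y) ≤ max (labs Fq x) (labs Fq y) := by
  by_cases hxy : x + y = 0
  · rw [labs, if_pos hxy]
    exact le_max_of_le_left (labs_nonneg x)
  by_cases hx : x = 0
  · simp [hx]
  by_cases hy : y = 0
  · simp [hy]
  have hord := HahnSeries.min_order_le_order_add hxy
  have hq := (one_lt_card_cast Fq).le
  rw [labs, labs, labs, if_neg hx, if_neg hy, if_neg hxy]
  rcases le_total x.order y.order with h | h
  · exact le_max_of_le_left (zpow_le_zpow_right₀ hq (by omega))
  · exact le_max_of_le_right (zpow_le_zpow_right₀ hq (by omega))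

lemma labs_le_inv_card_of_coeff_nonpos_eq_zero {y : LaurentSeries Fq}
    (hy : ∀ n ≤ 0, y.coeff n = 0) : labs Fq y ≤ (Fintype.card Fq : ℝ)⁻¹ := by
  by_cases hy0 : y = 0
  · rw [labs, if_pos hy0]
    positivity
  have horder : 1 ≤ y.order := by
    by_contra hlt
    exact hy0 (HahnSeries.coeff_order_eq_zero.mp (hy y.order (by omega)))
  rw [labs, if_neg hy0, ← zpow_neg_one]
  exact zpow_le_zpow_right₀ (one_lt_card_cast Fq).le (by omega)

lemma polyToL_neg {K : Type} [Field K] (P : K[X]) : polyToL K (-P) = -polyToL K P :=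
  eval₂_neg _

lemma polyToL_monomial {K : Type} [Field K] (k : ℕ) (a : K) :
    polyToL K (monomial k a) = HahnSeries.single (-(k : ℤ)) a := by
  rw [polyToL, eval₂_monomial, Tel, HahnSeries.single_pow, HahnSeries.C_apply,
    HahnSeries.single_mul_single]
  simp

lemma coeff_polyToL {K : Type} [Field K] (P : K[X]) (n : ℤ) :
    (polyToL K P).coeff n = if n ≤ 0 then P.coeff (-n).toNat else 0 := by
  induction P using Polynomial.induction_on' with
  | add P Q hP hQ =>
    rw [polyToL, eval₂_add, HahnSeries.coeff_add, ← polyToL, ← polyToL, hP, hQ]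
    split_ifs <;> simp
  | monomial k a =>
    rw [polyToL_monomial, HahnSeries.coeff_single, coeff_monomial]
    split_ifs <;> first | rfl | omega

lemma exists_labs_sub_polyToL_le (x : LaurentSeries Fq) :
    ∃ P : Fq[X], labs Fq (x - polyToL Fq P) ≤ (Fintype.card Fq : ℝ)⁻¹ := by
  set N := (1 - x.order).toNat
  refine ⟨∑ i ∈ Finset.range N, C (x.coeff (-(i : ℤ))) * X ^ i,
    labs_le_inv_card_of_coeff_nonpos_eq_zero fun n hn => ?_⟩
  rw [HahnSeries.coeff_sub, coeff_polyToL, if_pos hn, finsetSum_coeff]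
  simp only [coeff_C_mul_X_pow, Finset.sum_ite_eq, Finset.mem_range]
  split_ifs with hlt
  · rw [show -(((-n).toNat : ℕ) : ℤ) = n by omega, sub_self]
  · have : n < x.order := by omega
    rw [HahnSeries.coeff_eq_zero_of_lt_order this, sub_zero]

lemma mul_le_div_of_mul_le_max {q a b c s Δ : ℝ} (hq : 1 ≤ q) (ha : 0 ≤ a) (hb : 0 ≤ b)
    (hc : 0 ≤ c) (hqa : q * a ≤ s) (hsc : s * c ≤ Δ) (hsb : s * b ≤ max Δ (c * a)) :
    a * b ≤ Δ / q := by
  have hqab : q * a * b ≤ s * b := mul_le_mul_of_nonneg_right hqa hb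
  rw [le_div_iff₀ (by linarith)]
  rcases le_max_iff.mp hsb with hsb | hsb
  · linarith
  · have hqab0 : 0 ≤ q * a * b := by positivity
    calc a * b * q = q * a * b := by ring
      _ ≤ q * (q * a * b) := le_mul_of_one_le_left hqab0 hq
      _ ≤ q * (c * a) := mul_le_mul_of_nonneg_left (hqab.trans hsb) (by linarith)
      _ = c * (q * a) := by ring
      _ ≤ c * s := by gcongr
      _ ≤ Δ := by linarith

theorem stmt7_general (θ φ ψ χ : LaurentSeries Fq) (hψ : ψ ≠ 0) (Δ : ℝ)
    (h : max (labs Fq (θ * χ - φ * ψ)) (labs Fq (ψ * χ)) ≤ Δ) :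
    ∃ P : Polynomial Fq,
      labs Fq (θ + polyToL Fq P * ψ) * labs Fq (φ + polyToL Fq P * χ) ≤
        Δ / (Fintype.card Fq : ℝ) ∧
      labs Fq (θ + polyToL Fq P * ψ) ≤ labs Fq ψ := by
  obtain ⟨P, hP⟩ := exists_labs_sub_polyToL_le (θ / ψ)
  have hq := one_lt_card_cast Fq
  set q : ℝ := (Fintype.card Fq : ℝ)
  have hA : q * labs Fq (θ + polyToL Fq (-P) * ψ) ≤ labs Fq ψ := by
    rw [show θ + polyToL Fq (-P) * ψ = (θ / ψ - polyToL Fq P) * ψ by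
      rw [polyToL_neg]; field_simp; ring, labs_mul]
    calc q * (labs Fq (θ / ψ - polyToL Fq P) * labs Fq ψ) ≤ q * (q⁻¹ * labs Fq ψ) := by
          gcongr; exact labs_nonneg ψ
      _ = labs Fq ψ := mul_inv_cancel_left₀ (by positivity) _
  have hB : labs Fq ψ * labs Fq (φ + polyToL Fq (-P) * χ) ≤
      max Δ (labs Fq χ * labs Fq (θ + polyToL Fq (-P) * ψ)) := by
    rw [← labs_mul, ← labs_mul, show ψ * (φ + polyToL Fq (-P) * χ) =
      -(θ * χ - φ * ψ) + χ * (θ + polyToL Fq (-P) * ψ) by ring]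
    refine (labs_add_le_max _ _).trans (max_le_max ?_ le_rfl)
    exact (labs_neg _).trans_le ((le_max_left _ _).trans h)
  have hψχ : labs Fq ψ * labs Fq χ ≤ Δ := labs_mul ψ χ ▸ (le_max_right _ _).trans h
  have ha := labs_nonneg (θ + polyToL Fq (-P) * ψ)
  refine ⟨-P, mul_le_div_of_mul_le_max hq.le ha (labs_nonneg _) (labs_nonneg χ) hA hψχ hB, ?_⟩
  exact (le_mul_of_one_le_left ha hq.le).trans hA

/-- **Transference lemma.** If `ψ ≠ 0` and `max {|θχ − φψ|, |ψχ|} ≤ Δ`, then some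
polynomial `P` satisfies `|θ + Pψ|·|φ + Pχ| ≤ Δ/q` and `|θ + Pψ| ≤ |ψ|`. -/
theorem stmt7 (θ φ ψ χ : LaurentSeries Fq) (hψ : ψ ≠ 0) (Δ : ℝ) (hΔ : 0 < Δ)
    (h : max (labs Fq (θ * χ - φ * ψ)) (labs Fq (ψ * χ)) ≤ Δ) :
    ∃ P : Polynomial Fq,
      labs Fq (θ + polyToL Fq P * ψ) * labs Fq (φ + polyToL Fq P * χ) ≤
        Δ / (Fintype.card Fq : ℝ) ∧
      labs Fq (θ + polyToL Fq P * ψ) ≤ labs Fq ψ :=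
  stmt7_general θ φ ψ χ hψ Δ h

end
end
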